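/- arXiv:1812.10831 — 4 statements merged into one kernel-verified Lean document; each statement's English description precedes it below -/
import Mathlib

section
/- For every natural number k there exists a unique polynomial P over ℚ such that P evaluated at n equals ∑_{i=1}^{n} i^k for every natural number n; moreover this polynomial has degree k + 1 and its constant coefficient is 0. -/
/-! Faulhaber's formula writes the power sum as a polynomial in `n` whose top term is
`n^(k+1)/(k+1)`. Any other such polynomial agrees with it at infinitely many points, hence equals
it; and its constant coefficient is its value at `0`, the empty sum. -/

open Finset Polynomial

theorem Polynomial.eq_of_eval_natCast_eq {R : Type*} [CommRing R] [IsDomain R] [CharZero R]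
    {P Q : R[X]} (h : ∀ n : ℕ, P.eval (n : R) = Q.eval (n : R)) : P = Q :=
  eq_of_infinite_eval_eq P Q <| (Set.infinite_range_of_injective Nat.cast_injective).mono <| by
    rintro _ ⟨n, rfl⟩
    exact h n

-- Faulhaber's formula `sum_Ico_pow`; `bernoulli'` is the convention with `B'₁ = 1/2`.
noncomputable def faulhaber (p : ℕ) : ℚ[X] :=
  ∑ i ∈ range (p + 1), C (bernoulli' i * (p + 1).choose i / (p + 1)) * X ^ (p + 1 - i)

theorem eval_faulhaber (p n : ℕ) :
    (faulhaber p).eval (n : ℚ) = ∑ i ∈ Icc 1 n, (i : ℚ) ^ p := by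
  rw [← Ico_add_one_right_eq_Icc, sum_Ico_pow, faulhaber, eval_finsetSum]
  refine sum_congr rfl fun i _ => ?_
  rw [eval_mul, eval_C, eval_pow, eval_X]
  ring

theorem coeff_faulhaber_succ (p : ℕ) : (faulhaber p).coeff (p + 1) = (p + 1 : ℚ)⁻¹ := by
  rw [faulhaber, finsetSum_coeff, sum_eq_single 0]
  · simp
  · intro i hi hi0
    rw [coeff_C_mul_X_pow, if_neg (by grind)]
  · simp

theorem degree_faulhaber (p : ℕ) : (faulhaber p).degree = (p + 1 : ℕ) := by
  refine degree_eq_of_le_of_coeff_ne_zero ?_ (by rw [coeff_faulhaber_succ]; positivity)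
  refine (degree_sum_le _ _).trans <| Finset.sup_le fun i _ => ?_
  exact (degree_C_mul_X_pow_le _ _).trans (by exact_mod_cast Nat.sub_le _ _)

theorem stmt_2 (k : ℕ) :
    (∃! P : ℚ[X], ∀ n : ℕ, P.eval (n : ℚ) = ∑ i ∈ Icc 1 n, (i : ℚ) ^ k) ∧
      ∀ P : ℚ[X], (∀ n : ℕ, P.eval (n : ℚ) = ∑ i ∈ Icc 1 n, (i : ℚ) ^ k) →
        P.degree = (k + 1 : ℕ) ∧ P.coeff 0 = 0 := by
  have eq_faulhaber (P : ℚ[X]) (hP : ∀ n : ℕ, P.eval (n : ℚ) = ∑ i ∈ Icc 1 n, (i : ℚ) ^ k) :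
      P = faulhaber k :=
    eq_of_eval_natCast_eq fun n => (hP n).trans (eval_faulhaber k n).symm
  refine ⟨⟨faulhaber k, eval_faulhaber k, eq_faulhaber⟩, fun P hP => ⟨?_, ?_⟩⟩
  · rw [eq_faulhaber P hP, degree_faulhaber]
  · simpa [coeff_zero_eq_eval_zero] using hP 0
end

section
/- Define d : ℕ → ℚ by d k = (k+1) · B'_k, where B'_k is the k-th Bernoulli number with the convention B'_1 = +1/2; define β : ℕ → ℚ by β x = ∑_{j=0}^{x+1} (−1)^{x+1−j} · d j / ((j+1)! · (x+1−j)!), and define β* : ℕ → ℚ by β* x = β x − d (x+1) / (x+2)!. Then for every natural number x, d satisfies the non-linear recursion d (x+1) = −(x+1)! · ( ∑_{k=0}^{x−1} d (x−k) · β k / (x+1−k)! + β* x ), where the sum over k is empty when x = 0. -/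
open Finset

noncomputable def d (k : ℕ) : ℚ := (k + 1) * bernoulli' k

noncomputable def β (x : ℕ) : ℚ :=
  ∑ j ∈ range (x + 2),
    (-1 : ℚ) ^ (x + 1 - j) * d j / (((j + 1).factorial : ℚ) * ((x + 1 - j).factorial : ℚ))

noncomputable def βstar (x : ℕ) : ℚ := β x - d (x + 1) / ((x + 2).factorial : ℚ)

/-!
With `B(t) = t / (eᵗ - 1)` and `C(t) = t eᵗ / (eᵗ - 1)` the exponential generating functions of
`bernoulli` and `bernoulli'`, one has `B C = C - t C'` (both sides equal `t² eᵗ / (eᵗ - 1)²`).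
Comparing coefficients of `tⁿ` gives the convolution `∑ₖ C(n, k) Bₖ B'ₙ₋ₖ = (1 - n) B'ₙ`.
Since `β x = B_{x+1} / (x+1)!`, the recursion for `d` is this convolution for `n = x + 1`,
after multiplying through by `(x+1)!`.
-/

namespace PowerSeries

theorem exp_sub_one_ne_zero : exp ℚ - 1 ≠ 0 := fun h ↦ by
  simpa [coeff_exp] using congrArg (coeff 1) h

theorem bernoulliPowerSeries_mul_bernoulli'PowerSeries :
    bernoulliPowerSeries ℚ * bernoulli'PowerSeries ℚ =
      bernoulli'PowerSeries ℚ - X * d⁄dX ℚ (bernoulli'PowerSeries ℚ) := by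
  set B := bernoulliPowerSeries ℚ
  set B' := bernoulli'PowerSeries ℚ
  set E := exp ℚ
  have hB : B * (E - 1) = X := bernoulliPowerSeries_mul_exp_sub_one ℚ
  have hB' : B' * (E - 1) = X * E := bernoulli'PowerSeries_mul_exp_sub_one ℚ
  have hdB' : d⁄dX ℚ B' * (E - 1) + B' * E = E + X * E := by
    have := congrArg (d⁄dX ℚ) hB'
    simp only [Derivation.leibniz, smul_eq_mul, derivative_X, map_sub,
      Derivation.map_one_eq_zero, sub_zero, E, derivative_exp] at this
    linear_combination this
  refine mul_right_cancel₀ (pow_ne_zero 2 exp_sub_one_ne_zero) ?_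
  linear_combination (B' * (E - 1)) * hB + (X - E + 1 - X * E) * hB' + X * (E - 1) * hdB'

end PowerSeries

open PowerSeries in
theorem sum_choose_mul_bernoulli_mul_bernoulli' (n : ℕ) :
    ∑ k ∈ range (n + 1), (n.choose k : ℚ) * bernoulli k * bernoulli' (n - k) =
      (1 - n) * bernoulli' n := by
  have h := congrArg (coeff n) bernoulliPowerSeries_mul_bernoulli'PowerSeries
  rw [map_sub, coeff_mul, Finset.Nat.sum_antidiagonal_eq_sum_range_succ_mk] at h
  have hX : coeff n (X * d⁄dX ℚ (bernoulli'PowerSeries ℚ)) = n * (bernoulli' n / n.factorial) := by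
    cases n with
    | zero => simp
    | succ m =>
      rw [coeff_succ_X_mul, coeff_derivative]
      simp only [bernoulli'PowerSeries, coeff_mk, Algebra.algebraMap_self, RingHom.id_apply,
        Nat.factorial_succ]
      push_cast
      field_simp
  rw [hX] at h
  simp only [bernoulliPowerSeries, bernoulli'PowerSeries, coeff_mk, Algebra.algebraMap_self,
    RingHom.id_apply] at h
  have hn := n.factorial_ne_zero
  calc ∑ k ∈ range (n + 1), (n.choose k : ℚ) * bernoulli k * bernoulli' (n - k)
      = n.factorial * ∑ k ∈ range (n + 1),
          bernoulli k / k.factorial * (bernoulli' (n - k) / (n - k).factorial) := by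
        rw [mul_sum]
        refine sum_congr rfl fun k hk ↦ ?_
        rw [Nat.cast_choose ℚ (mem_range_succ_iff.mp hk)]
        have := k.factorial_ne_zero
        have := (n - k).factorial_ne_zero
        field_simp
    _ = (1 - n) * bernoulli' n := by
        rw [h]
        field_simp

theorem sum_range_succ_choose_mul_bernoulli (n : ℕ) :
    ∑ k ∈ range (n + 1), (n.choose k : ℚ) * bernoulli k = bernoulli' n := by
  rw [sum_range_succ, sum_bernoulli, Nat.choose_self, Nat.cast_one, one_mul]
  by_cases hn : n = 1
  · subst hn
    norm_num [bernoulli_one, bernoulli'_one]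
  · rw [if_neg hn, zero_add, bernoulli_eq_bernoulli'_of_ne_one hn]

theorem β_eq_bernoulli_div_factorial (x : ℕ) : β x = bernoulli (x + 1) / (x + 1).factorial := by
  have hx := (x + 1).factorial_ne_zero
  have hsign : ((-1 : ℚ) ^ (x + 1)) ^ 2 = 1 := by simp [← pow_mul]
  calc β x = (-1) ^ (x + 1) / (x + 1).factorial *
        ∑ j ∈ range (x + 2), ((x + 1).choose j : ℚ) * bernoulli j := by
        rw [β, mul_sum]
        refine sum_congr rfl fun j hj ↦ ?_
        have hj' := mem_range_succ_iff.mp hj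
        have hsign_j : (-1 : ℚ) ^ (x + 1 - j) * (-1) ^ j = (-1) ^ (x + 1) := by
          rw [← pow_add, Nat.sub_add_cancel hj']
        rw [Nat.cast_choose ℚ hj', d, bernoulli'_eq_bernoulli, Nat.factorial_succ j]
        have := j.factorial_ne_zero
        have := (x + 1 - j).factorial_ne_zero
        push_cast
        field_simp
        linear_combination bernoulli j * hsign_j
    _ = bernoulli (x + 1) / (x + 1).factorial := by
        rw [sum_range_succ_choose_mul_bernoulli, bernoulli'_eq_bernoulli]
        field_simp
        linear_combination bernoulli (x + 1) * hsign

theorem factorial_mul_sum_d_mul_β (x : ℕ) :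
    (x + 1).factorial * ∑ k ∈ range x, d (x - k) * β k / (x + 1 - k).factorial =
      -(x + 1) * bernoulli' (x + 1) - bernoulli (x + 1) := by
  have hconv := sum_choose_mul_bernoulli_mul_bernoulli' (x + 1)
  rw [sum_range_succ, sum_range_succ'] at hconv
  simp only [Nat.sub_self, Nat.sub_zero, Nat.choose_self, Nat.choose_zero_right, bernoulli_zero,
    bernoulli'_zero, Nat.cast_one, one_mul, mul_one, Nat.cast_add] at hconv
  rw [mul_sum]
  calc ∑ k ∈ range x, (x + 1).factorial * (d (x - k) * β k / (x + 1 - k).factorial)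
      = ∑ k ∈ range x, ((x + 1).choose (k + 1) : ℚ) * bernoulli (k + 1) *
          bernoulli' (x + 1 - (k + 1)) := by
        refine sum_congr rfl fun k hk ↦ ?_
        have hk := mem_range.mp hk
        rw [β_eq_bernoulli_div_factorial, d, Nat.cast_choose ℚ (by omega : k + 1 ≤ x + 1),
          Nat.add_sub_add_right,
          (by omega : x + 1 - k = x - k + 1), Nat.factorial_succ (x - k), Nat.factorial_succ k]
        have := (x - k).factorial_ne_zero
        have := k.factorial_ne_zero
        push_cast
        field_simp
    _ = -(x + 1) * bernoulli' (x + 1) - bernoulli (x + 1) := by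
        linear_combination hconv

theorem factorial_mul_βstar (x : ℕ) :
    (x + 1).factorial * βstar x = bernoulli (x + 1) - bernoulli' (x + 1) := by
  rw [βstar, β_eq_bernoulli_div_factorial, d, Nat.factorial_succ (x + 1)]
  have := (x + 1).factorial_ne_zero
  push_cast
  field_simp

theorem stmt_13 (x : ℕ) :
    d (x + 1) = -((x + 1).factorial : ℚ) *
      ((∑ k ∈ range x, d (x - k) * β k / ((x + 1 - k).factorial : ℚ)) + βstar x) := by
  rw [neg_mul, mul_add, factorial_mul_sum_d_mul_β, factorial_mul_βstar, d]
  push_cast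
  ring
end

section
/- For natural numbers x and m with m ≥ x + 1, let P_m, P_{m−1} ∈ ℚ[X] be the polynomials satisfying P_m.eval n = ∑_{i=1}^{n} i^m and P_{m−1}.eval n = ∑_{i=1}^{n} i^{m−1} for all n ∈ ℕ, and let C_x = (x+2) · B'_{x+1} / (x+1)!, where B'_k is the k-th Bernoulli number with the convention B'_1 = +1/2. Then the coefficients satisfy the condensed recursion: coeff of X^{m−x} in P_m = (coeff of X^{m−1−x} in P_{m−1}) · m·(m−x−1) / ((m+1)·(m−x)) + C_x · m! / ((m+1)·(m−x)!). -/
/-!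
A polynomial is determined by its values at the natural numbers, so `P_p` is Faulhaber's
polynomial `∑_{i ≤ p} B'_i · C(p+1, i)/(p+1) · X^(p+1-i)`. Hence
`a_{m,m-x} = B'_{x+1} C(m+1, x+1)/(m+1)` and `a_{m-1,m-1-x} = B'_{x+1} C(m, x+1)/m`, and the
recursion reduces to an identity between binomial coefficients. For `m = x + 1` the coefficient
of `P_{m-1}` is multiplied by `m - x - 1 = 0`, so its value does not matter.
-/

open Finset Polynomial

noncomputable def powerSumPoly (p : ℕ) : ℚ[X] :=
  ∑ i ∈ range (p + 1), C (bernoulli' i * (p + 1).choose i / (p + 1)) * X ^ (p + 1 - i)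

theorem eval_natCast_powerSumPoly (p n : ℕ) :
    (powerSumPoly p).eval (n : ℚ) = ∑ i ∈ Icc 1 n, (i : ℚ) ^ p := by
  rw [← Ico_add_one_right_eq_Icc, sum_Ico_pow, powerSumPoly]
  simp only [eval_finsetSum, eval_mul, eval_C, eval_pow, eval_X]
  exact sum_congr rfl fun i _ => by ring

theorem eq_powerSumPoly_of_eval_natCast (p : ℕ) (P : ℚ[X])
    (hP : ∀ n : ℕ, P.eval (n : ℚ) = ∑ i ∈ Icc 1 n, (i : ℚ) ^ p) : P = powerSumPoly p := by
  apply eq_of_infinite_eval_eq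
  refine (Set.infinite_range_of_injective Nat.cast_injective).mono ?_
  rintro _ ⟨n, rfl⟩
  simp only [Set.mem_ofPred_eq, hP, eval_natCast_powerSumPoly]

theorem coeff_powerSumPoly (p i : ℕ) (hi : i ≤ p) :
    (powerSumPoly p).coeff (p + 1 - i) = bernoulli' i * (p + 1).choose i / (p + 1) := by
  rw [powerSumPoly, finsetSum_coeff, sum_eq_single i]
  · simp
  · intro j hj hji
    rw [coeff_C_mul, coeff_X_pow, if_neg (by simp at hj; omega), mul_zero]
  · intro hi'
    exact absurd (mem_range.mpr (by omega)) hi'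

theorem cast_choose_succ_div_succ_eq (x m : ℕ) (hm : x + 1 ≤ m) :
    ((m + 1).choose (x + 1) : ℚ) / (m + 1) =
      (m.choose (x + 1) : ℚ) / m * ((m : ℚ) * ((m : ℚ) - (x : ℚ) - 1)) /
          (((m : ℚ) + 1) * ((m : ℚ) - (x : ℚ))) +
        (x + 2 : ℚ) / ((x + 1).factorial : ℚ) * (m.factorial : ℚ) /
          (((m : ℚ) + 1) * ((m - x).factorial : ℚ)) := by
  obtain ⟨a, rfl⟩ := Nat.exists_eq_add_of_le hm
  rw [Nat.cast_choose ℚ (by omega : x + 1 ≤ x + 1 + a + 1),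
    Nat.cast_choose ℚ (by omega : x + 1 ≤ x + 1 + a),
    show x + 1 + a + 1 - (x + 1) = a + 1 by omega, show x + 1 + a - (x + 1) = a by omega,
    show x + 1 + a - x = a + 1 by omega, Nat.factorial_succ (x + 1 + a), Nat.factorial_succ a]
  push_cast
  rw [show (x : ℚ) + 1 + a - x - 1 = a by ring, show (x : ℚ) + 1 + a - x = a + 1 by ring]
  field_simp
  ring

theorem stmt_14 (x m : ℕ) (hm : x + 1 ≤ m) (Pm Pm' : ℚ[X])
    (hPm : ∀ n : ℕ, Pm.eval (n : ℚ) = ∑ i ∈ Icc 1 n, (i : ℚ) ^ m)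
    (hPm' : ∀ n : ℕ, Pm'.eval (n : ℚ) = ∑ i ∈ Icc 1 n, (i : ℚ) ^ (m - 1)) :
    Pm.coeff (m - x) =
      Pm'.coeff (m - 1 - x) * ((m : ℚ) * ((m : ℚ) - (x : ℚ) - 1)) /
        (((m : ℚ) + 1) * ((m : ℚ) - (x : ℚ))) +
      ((x + 2 : ℚ) * bernoulli' (x + 1) / ((x + 1).factorial : ℚ)) * (m.factorial : ℚ) /
        (((m : ℚ) + 1) * ((m - x).factorial : ℚ)) := by
  have hcoeff : Pm.coeff (m - x) = bernoulli' (x + 1) * (m + 1).choose (x + 1) / (m + 1) := by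
    rw [eq_powerSumPoly_of_eval_natCast m Pm hPm, show m - x = m + 1 - (x + 1) by omega,
      coeff_powerSumPoly m (x + 1) hm]
  have hcoeff' : Pm'.coeff (m - 1 - x) * ((m : ℚ) * ((m : ℚ) - (x : ℚ) - 1)) =
      bernoulli' (x + 1) * (m.choose (x + 1) / m) * ((m : ℚ) * ((m : ℚ) - (x : ℚ) - 1)) := by
    rcases hm.eq_or_lt with rfl | hlt
    · push_cast
      ring
    · rw [eq_powerSumPoly_of_eval_natCast (m - 1) Pm' hPm',
        show m - 1 - x = m - 1 + 1 - (x + 1) by omega, coeff_powerSumPoly (m - 1) (x + 1) (by omega),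
        Nat.sub_add_cancel (by omega : 1 ≤ m), Nat.cast_pred (by omega)]
      ring
  rw [hcoeff, hcoeff', mul_div_assoc, cast_choose_succ_div_succ_eq x m hm]
  ring
end

section
/- For all natural numbers k and n, if P ∈ ℚ[X] satisfies P.eval j = ∑_{i=1}^{j} i^k for all j ∈ ℕ, then ∑_{i=1}^{n} i^{k+1} = n · P.eval n − ∑_{i=1}^{n} P.eval (i−1), as an identity in ℚ. -/
open Finset Polynomial

theorem sum_Icc_natCast_mul_eq_sub_sum_partialSums {R : Type*} [CommRing R] (f : ℕ → R) (n : ℕ) :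
    ∑ i ∈ Icc 1 n, (i : R) * f i =
      n * ∑ i ∈ Icc 1 n, f i - ∑ i ∈ Icc 1 n, ∑ j ∈ Icc 1 (i - 1), f j := by
  induction n with
  | zero => simp
  | succ n ih =>
    rw [sum_Icc_succ_top (by omega), sum_Icc_succ_top (by omega), sum_Icc_succ_top (by omega), ih,
      Nat.add_sub_cancel]
    push_cast
    ring

theorem stmt_15 (k n : ℕ) (P : ℚ[X])
    (hP : ∀ j : ℕ, P.eval (j : ℚ) = ∑ i ∈ Icc 1 j, (i : ℚ) ^ k) :
    ∑ i ∈ Icc 1 n, (i : ℚ) ^ (k + 1) =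
      (n : ℚ) * P.eval (n : ℚ) - ∑ i ∈ Icc 1 n, P.eval ((i : ℚ) - 1) := by
  have hshift : ∀ i ∈ Icc 1 n, P.eval ((i : ℚ) - 1) = ∑ j ∈ Icc 1 (i - 1), (j : ℚ) ^ k := by
    intro i hi
    rw [← Nat.cast_pred (mem_Icc.1 hi).1, hP]
  simp only [pow_succ', hP n, sum_congr rfl hshift]
  exact sum_Icc_natCast_mul_eq_sub_sum_partialSums _ n
end
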